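/- Let Ω be a non-empty bounded open subset of ℝ^d, θ a unit vector, and A a non-empty subset of ∂Ω. Then A is μ_θ-negligible if and only if P_θ(A ∩ ∂_θ Ω) is λ^{d−1}-negligible, where μ_θ is the directional boundary measure, P_θ the orthogonal projection onto the hyperplane orthogonal to θ, and ∂_θ Ω = {z ∈ ∂Ω : ∃ r > 0, ∀ t ∈ (0,r), z − tθ ∈ Ω}. -/

import Mathlib

/-!
Split the space as `(ℝ ∙ θ)ᗮ × ℝ` through `x ↦ (P x, ⟪θ, x⟫)`, `P` the orthogonal projection.
This linear isomorphism carries Lebesgue measure to a Haar measure, hence has the same null sets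
as `μH[d - 1] ⊗ λ¹`, since `μH[d - 1]` is a Haar measure on the hyperplane.

A point `z ∈ ∂_θ Ω` is the exit point of every point of a segment `z - (0, r) θ`, so when
`z ∈ B` the line over `P z` meets `{x ∈ Ω | z_θ x ∈ B}` in a set of positive length; by Fubini,
a `μ_θ`-null `B` meets `∂_θ Ω` only above a null subset of the hyperplane. Conversely every exit
point lies in `∂_θ Ω` and has the same projection as its starting point, so `P⁻¹ N ∪ (∂_θ Ω)ᶜ` is
`μ_θ`-null whenever `N` is null.
-/

open Set MeasureTheory
open scoped RealInnerProductSpace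

noncomputable def dirDelta {d : ℕ} (Ω : Set (EuclideanSpace ℝ (Fin d)))
    (θ x : EuclideanSpace ℝ (Fin d)) : ℝ :=
  sSup {s : ℝ | 0 ≤ s ∧ ∀ t : ℝ, 0 ≤ t → t < s → x + t • θ ∈ Ω}

noncomputable def exitPoint {d : ℕ} (Ω : Set (EuclideanSpace ℝ (Fin d)))
    (θ x : EuclideanSpace ℝ (Fin d)) : EuclideanSpace ℝ (Fin d) :=
  x + dirDelta Ω θ x • θ

noncomputable def dirMeas {d : ℕ} (Ω : Set (EuclideanSpace ℝ (Fin d)))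
    (θ : EuclideanSpace ℝ (Fin d)) (A : Set (EuclideanSpace ℝ (Fin d))) : ENNReal :=
  volume {x | x ∈ Ω ∧ exitPoint Ω θ x ∈ A}

def dirBoundary {d : ℕ} (Ω : Set (EuclideanSpace ℝ (Fin d)))
    (θ : EuclideanSpace ℝ (Fin d)) : Set (EuclideanSpace ℝ (Fin d)) :=
  {z ∈ closure Ω \ Ω | ∃ r : ℝ, 0 < r ∧ ∀ t : ℝ, 0 < t → t < r → z - t • θ ∈ Ω}

noncomputable def hypProj {d : ℕ} (θ x : EuclideanSpace ℝ (Fin d)) :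
    EuclideanSpace ℝ (Fin d) :=
  x - ⟪x, θ⟫ • θ

open scoped Topology

section RayGeometry

variable {d : ℕ} {Ω : Set (EuclideanSpace ℝ (Fin d))} {θ x z : EuclideanSpace ℝ (Fin d)}

lemma dirDelta_nonneg : 0 ≤ dirDelta Ω θ x :=
  Real.sSup_nonneg fun _ hs => hs.1

lemma add_smul_mem_of_lt_dirDelta {t : ℝ} (ht0 : 0 ≤ t) (ht : t < dirDelta Ω θ x) :
    x + t • θ ∈ Ω := by
  obtain ⟨s, hs, hts⟩ := exists_lt_of_lt_csSup
    (by exact ⟨0, le_rfl, fun t ht0 ht => (ht0.not_gt ht).elim⟩) ht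
  exact hs.2 t ht0 hts

lemma bddAbove_dirDelta_set (hbd : Bornology.IsBounded Ω) (hθ : ‖θ‖ = 1) :
    BddAbove {s : ℝ | 0 ≤ s ∧ ∀ t : ℝ, 0 ≤ t → t < s → x + t • θ ∈ Ω} := by
  obtain ⟨R, hR⟩ := hbd.subset_closedBall x
  refine ⟨max R 0 + 1, fun s ⟨_, hs⟩ => ?_⟩
  by_contra! hlt
  have hmem := hR (hs (max R 0 + 1) (by positivity) hlt)
  rw [Metric.mem_closedBall, dist_self_add_left, norm_smul, hθ, mul_one,
    Real.norm_of_nonneg (by positivity)] at hmem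
  linarith [le_max_left R 0]

lemma le_dirDelta_iff (hbd : Bornology.IsBounded Ω) (hθ : ‖θ‖ = 1) {s : ℝ} :
    s ≤ dirDelta Ω θ x ↔ ∀ t : ℝ, 0 ≤ t → t < s → x + t • θ ∈ Ω := by
  refine ⟨fun hs t ht0 hts => add_smul_mem_of_lt_dirDelta ht0 (hts.trans_le hs), fun hs => ?_⟩
  rcases le_total s 0 with hs0 | hs0
  · exact hs0.trans dirDelta_nonneg
  · exact le_csSup (bddAbove_dirDelta_set hbd hθ) ⟨hs0, hs⟩

variable (hopen : IsOpen Ω) (hbd : Bornology.IsBounded Ω) (hθ : ‖θ‖ = 1)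
include hbd hθ

include hopen in
lemma dirDelta_pos (hx : x ∈ Ω) : 0 < dirDelta Ω θ x := by
  obtain ⟨ε, hε, hball⟩ := Metric.isOpen_iff.1 hopen x hx
  refine hε.trans_le ((le_dirDelta_iff hbd hθ).2 fun t ht0 htε => hball ?_)
  rwa [Metric.mem_ball, dist_self_add_left, norm_smul, hθ, mul_one, Real.norm_of_nonneg ht0]

include hopen in
lemma exitPoint_notMem : exitPoint Ω θ x ∉ Ω := by
  intro hmem
  obtain ⟨ε, hε, hball⟩ := Metric.isOpen_iff.1 hopen _ hmem
  have : dirDelta Ω θ x + ε ≤ dirDelta Ω θ x := by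
    refine (le_dirDelta_iff hbd hθ).2 fun t ht0 ht => ?_
    rcases lt_or_ge t (dirDelta Ω θ x) with h | h
    · exact add_smul_mem_of_lt_dirDelta ht0 h
    · refine hball ?_
      rw [Metric.mem_ball, exitPoint, dist_add_left, dist_eq_norm, ← sub_smul, norm_smul, hθ,
        mul_one, Real.norm_of_nonneg (by linarith)]
      linarith
  linarith

include hopen in
lemma exitPoint_mem_dirBoundary (hx : x ∈ Ω) : exitPoint Ω θ x ∈ dirBoundary Ω θ := by
  have hδ := dirDelta_pos hopen hbd hθ hx
  have hclosure : exitPoint Ω θ x ∈ closure Ω := by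
    refine mem_closure_of_tendsto (f := fun t : ℝ => x + t • θ) (b := 𝓝[<] dirDelta Ω θ x)
      ((Continuous.tendsto (by fun_prop) _).mono_left nhdsWithin_le_nhds) ?_
    filter_upwards [Ioo_mem_nhdsLT hδ] with t ht
    exact add_smul_mem_of_lt_dirDelta ht.1.le ht.2
  refine ⟨⟨hclosure, exitPoint_notMem hopen hbd hθ⟩, dirDelta Ω θ x, hδ, fun t ht0 htδ => ?_⟩
  have : exitPoint Ω θ x - t • θ = x + (dirDelta Ω θ x - t) • θ := by
    rw [exitPoint, sub_smul]; abel
  rw [this]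
  exact add_smul_mem_of_lt_dirDelta (by linarith) (by linarith)

lemma exitPoint_sub_smul (hz : z ∉ Ω) {r : ℝ} (hr : ∀ t : ℝ, 0 < t → t < r → z - t • θ ∈ Ω)
    {t : ℝ} (ht0 : 0 < t) (htr : t < r) : exitPoint Ω θ (z - t • θ) = z := by
  suffices dirDelta Ω θ (z - t • θ) = t by rw [exitPoint, this, sub_add_cancel]
  refine le_antisymm (not_lt.1 fun h => hz ?_) ((le_dirDelta_iff hbd hθ).2 fun s hs0 hst => ?_)
  · simpa using add_smul_mem_of_lt_dirDelta ht0.le h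
  · rw [sub_add, ← sub_smul]
    exact hr _ (by linarith) (by linarith)

include hopen in
lemma lowerSemicontinuous_dirDelta : LowerSemicontinuous (dirDelta Ω θ) := by
  intro x c hc
  obtain ⟨s, hcs, hsδ⟩ := exists_between hc
  rcases lt_or_ge s 0 with hs0 | hs0
  · exact Filter.Eventually.of_forall fun y => (hcs.trans hs0).trans_le dirDelta_nonneg
  have hK : IsCompact ((fun t : ℝ => x + t • θ) '' Icc 0 s) :=
    isCompact_Icc.image (by fun_prop)
  have hKΩ : (fun t : ℝ => x + t • θ) '' Icc 0 s ⊆ Ω := by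
    rintro _ ⟨t, ⟨ht0, hts⟩, rfl⟩
    exact add_smul_mem_of_lt_dirDelta ht0 (hts.trans_lt hsδ)
  obtain ⟨ε, hε, hthick⟩ := hK.exists_thickening_subset_open hopen hKΩ
  filter_upwards [Metric.ball_mem_nhds x hε] with y hy
  refine hcs.trans_le ((le_dirDelta_iff hbd hθ).2 fun t ht0 hts => hthick ?_)
  refine Metric.mem_thickening_iff.2 ⟨x + t • θ, ⟨t, ⟨ht0, hts.le⟩, rfl⟩, ?_⟩
  rwa [dist_add_right]

include hopen in
lemma measurableSet_dirBoundary : MeasurableSet (dirBoundary Ω θ) := by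
  -- The segment `z - (0, q] θ` lies in `Ω` iff `q ≤ dirDelta Ω θ (z - q θ)`; rational `q` suffice.
  have hchar : dirBoundary Ω θ = (closure Ω \ Ω) ∩
      ⋃ (q : ℚ) (_ : (0 : ℝ) < q), {z | (q : ℝ) ≤ dirDelta Ω θ (z - (q : ℝ) • θ)} := by
    ext z
    simp only [dirBoundary, mem_ofPred_eq, mem_inter_iff, mem_iUnion, le_dirDelta_iff hbd hθ,
      exists_prop, and_congr_right_iff]
    intro _
    constructor
    · rintro ⟨r, hr0, hr⟩
      obtain ⟨q, hq0, hqr⟩ := exists_rat_btwn hr0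
      refine ⟨q, hq0, fun s hs0 hsq => ?_⟩
      rw [sub_add, ← sub_smul]
      exact hr _ (by linarith) (by linarith)
    · rintro ⟨q, hq0, hq⟩
      refine ⟨q, hq0, fun t ht0 htq => ?_⟩
      simpa [sub_add, ← sub_smul] using hq (q - t) (by linarith) (by linarith)
  have hmeas := (lowerSemicontinuous_dirDelta hopen hbd hθ).measurable
  rw [hchar]
  exact (isClosed_closure.measurableSet.diff hopen.measurableSet).inter <|
    .iUnion fun q => .iUnion fun _ =>
      measurableSet_le measurable_const (hmeas.comp (measurable_id.sub_const _))

end RayGeometry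

section Splitting

variable {E : Type*} [NormedAddCommGroup E] [InnerProductSpace ℝ E] {θ : E}

lemma coe_orthogonalProjectionOnto_orthogonal_singleton (hθ : ‖θ‖ = 1) (x : E) :
    ((ℝ ∙ θ)ᗮ.orthogonalProjectionOnto x : E) = x - ⟪θ, x⟫ • θ := by
  rw [Submodule.coe_orthogonalProjectionOnto_apply, Submodule.starProjection_orthogonal_val,
    Submodule.starProjection_unit_singleton ℝ hθ]

lemma orthogonalProjectionOnto_add_smul (x : E) (t : ℝ) :
    (ℝ ∙ θ)ᗮ.orthogonalProjectionOnto (x + t • θ) = (ℝ ∙ θ)ᗮ.orthogonalProjectionOnto x := by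
  simp [Submodule.orthogonalProjectionOnto_orthogonalComplement_singleton_eq_zero]

noncomputable def orthogonalSplitting (hθ : ‖θ‖ = 1) : E ≃L[ℝ] (ℝ ∙ θ)ᗮ × ℝ :=
  .equivOfInverse ((ℝ ∙ θ)ᗮ.orthogonalProjectionOnto.prod (innerSL ℝ θ))
    ((ℝ ∙ θ)ᗮ.subtypeL.coprod ((1 : ℝ →L[ℝ] ℝ).smulRight θ))
    (fun x => by simp [coe_orthogonalProjectionOnto_orthogonal_singleton hθ])
    (fun ⟨y, s⟩ => by
      have hy : ⟪θ, (y : E)⟫ = 0 := Submodule.mem_orthogonal_singleton_iff_inner_right.1 y.2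
      simp [inner_add_right, hy, real_inner_smul_right, hθ])

@[simp] lemma orthogonalSplitting_apply (hθ : ‖θ‖ = 1) (x : E) :
    orthogonalSplitting hθ x = ((ℝ ∙ θ)ᗮ.orthogonalProjectionOnto x, ⟪θ, x⟫) := rfl

variable [FiniteDimensional ℝ E] [MeasurableSpace E] [BorelSpace E]
  (μ : Measure E) [μ.IsAddHaarMeasure] {ν : Measure (ℝ ∙ θ)ᗮ} [ν.IsAddHaarMeasure]

lemma addHaar_preimage_orthogonalProjectionOnto_eq_zero (hθ : ‖θ‖ = 1) {N : Set (ℝ ∙ θ)ᗮ}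
    (hN : ν N = 0) : μ ((ℝ ∙ θ)ᗮ.orthogonalProjectionOnto ⁻¹' N) = 0 := by
  let e := (orthogonalSplitting hθ).toHomeomorph.toMeasurableEquiv
  have : Measure.IsAddHaarMeasure (μ.map e) := (orthogonalSplitting hθ).isAddHaarMeasure_map μ
  have hpre : (ℝ ∙ θ)ᗮ.orthogonalProjectionOnto ⁻¹' N = e ⁻¹' (N ×ˢ univ) := by
    ext x; simp [e]
  rw [hpre, ← e.map_apply]
  exact Measure.absolutelyContinuous_isAddHaarMeasure _ (ν.prod volume)
    (by rw [Measure.prod_prod, hN, zero_mul])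

lemma ae_volume_setOf_add_smul_mem_eq_zero (hθ : ‖θ‖ = 1) {M : Set E} (hM : μ M = 0) :
    ∀ᵐ y : (ℝ ∙ θ)ᗮ ∂ν, volume {t : ℝ | ↑y + t • θ ∈ M} = 0 := by
  let e := (orthogonalSplitting hθ).toHomeomorph.toMeasurableEquiv
  have : Measure.IsAddHaarMeasure (μ.map e) := (orthogonalSplitting hθ).isAddHaarMeasure_map μ
  have hT : (ν.prod volume) (e.symm ⁻¹' toMeasurable μ M) = 0 := by
    refine Measure.absolutelyContinuous_isAddHaarMeasure _ (μ.map e) ?_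
    rw [e.map_apply, ← preimage_comp, e.symm_comp_self, preimage_id, measure_toMeasurable, hM]
  filter_upwards [(Measure.measure_prod_null
    (e.symm.measurable (measurableSet_toMeasurable μ M))).1 hT] with y hy
  exact measure_mono_null (fun t ht => subset_toMeasurable μ M ht) hy

end Splitting

section Hyperplane

variable {d : ℕ} {θ : EuclideanSpace ℝ (Fin d)}

lemma hypProj_eq_orthogonalProjectionOnto (hθ : ‖θ‖ = 1) (x : EuclideanSpace ℝ (Fin d)) :
    hypProj θ x = (ℝ ∙ θ)ᗮ.orthogonalProjectionOnto x := by
  rw [coe_orthogonalProjectionOnto_orthogonal_singleton hθ, hypProj, real_inner_comm]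

lemma hausdorffMeasure_image_hypProj (hθ : ‖θ‖ = 1) (S : Set (EuclideanSpace ℝ (Fin d))) :
    μH[(d : ℝ) - 1] (hypProj θ '' S) =
      μH[Module.finrank ℝ (ℝ ∙ θ)ᗮ] ((ℝ ∙ θ)ᗮ.orthogonalProjectionOnto '' S) := by
  have hθ0 : θ ≠ 0 := by rintro rfl; simp at hθ
  obtain ⟨n, rfl⟩ : ∃ n, d = n + 1 :=
    Nat.exists_eq_succ_of_ne_zero fun hd => hθ0 (by subst hd; exact Subsingleton.elim _ _)
  have : Fact (Module.finrank ℝ (EuclideanSpace ℝ (Fin (n + 1))) = n + 1) :=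
    ⟨finrank_euclideanSpace_fin⟩
  have hproj : hypProj θ = ((↑) : (ℝ ∙ θ)ᗮ → _) ∘ (ℝ ∙ θ)ᗮ.orthogonalProjectionOnto :=
    funext (hypProj_eq_orthogonalProjectionOnto hθ)
  rw [Submodule.finrank_orthogonal_span_singleton (n := n) hθ0,
    show ((n + 1 : ℕ) : ℝ) - 1 = n by push_cast; ring, hproj, image_comp,
    isometry_subtype_coe.hausdorffMeasure_image (Or.inl n.cast_nonneg)]

variable {Ω : Set (EuclideanSpace ℝ (Fin d))} (hbd : Bornology.IsBounded Ω) (hθ : ‖θ‖ = 1)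
  {ν : Measure (ℝ ∙ θ)ᗮ} [ν.IsAddHaarMeasure]
include hbd hθ

lemma addHaar_image_orthogonalProjectionOnto_eq_zero_of_dirMeas_eq_zero
    {B : Set (EuclideanSpace ℝ (Fin d))} (hB : dirMeas Ω θ B = 0) :
    ν ((ℝ ∙ θ)ᗮ.orthogonalProjectionOnto '' (B ∩ dirBoundary Ω θ)) = 0 := by
  refine measure_mono_null ?_ (ae_iff.1 (ae_volume_setOf_add_smul_mem_eq_zero volume hθ hB))
  rintro _ ⟨z, ⟨hzB, ⟨-, hzΩ⟩, r, hr0, hr⟩, rfl⟩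
  have hIoo : Ioo (⟪θ, z⟫ - r) ⟪θ, z⟫ ⊆ {t : ℝ |
      ↑((ℝ ∙ θ)ᗮ.orthogonalProjectionOnto z) + t • θ ∈ {x | x ∈ Ω ∧ exitPoint Ω θ x ∈ B}} := by
    intro t ht
    have hline : ((ℝ ∙ θ)ᗮ.orthogonalProjectionOnto z : EuclideanSpace ℝ (Fin d)) + t • θ =
        z - (⟪θ, z⟫ - t) • θ := by
      rw [coe_orthogonalProjectionOnto_orthogonal_singleton hθ, sub_smul]; abel
    have ht0 : 0 < ⟪θ, z⟫ - t := by linarith [ht.2]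
    have htr : ⟪θ, z⟫ - t < r := by linarith [ht.1]
    rw [mem_ofPred_eq, hline]
    exact ⟨hr _ ht0 htr, by rwa [exitPoint_sub_smul hbd hθ hzΩ hr ht0 htr]⟩
  intro h0
  have := measure_mono_null hIoo h0
  rw [Real.volume_Ioo, ENNReal.ofReal_eq_zero] at this
  linarith

variable (hopen : IsOpen Ω)
include hopen

lemma dirMeas_preimage_orthogonalProjectionOnto_union_compl_eq_zero {N : Set (ℝ ∙ θ)ᗮ}
    (hN : ν N = 0) :
    dirMeas Ω θ ((ℝ ∙ θ)ᗮ.orthogonalProjectionOnto ⁻¹' N ∪ (dirBoundary Ω θ)ᶜ) = 0 := by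
  refine measure_mono_null ?_ (addHaar_preimage_orthogonalProjectionOnto_eq_zero volume hθ hN)
  rintro x ⟨hx, hexit | hexit⟩
  · rwa [mem_preimage, exitPoint, orthogonalProjectionOnto_add_smul] at hexit
  · exact (hexit (exitPoint_mem_dirBoundary hopen hbd hθ hx)).elim

end Hyperplane

theorem stmt8_general {d : ℕ} (Ω : Set (EuclideanSpace ℝ (Fin d)))
    (hopen : IsOpen Ω) (hbd : Bornology.IsBounded Ω)
    (θ : EuclideanSpace ℝ (Fin d)) (hθ : ‖θ‖ = 1)
    (A : Set (EuclideanSpace ℝ (Fin d))) :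
    (∃ B : Set (EuclideanSpace ℝ (Fin d)), MeasurableSet B ∧ A ⊆ B ∧ dirMeas Ω θ B = 0) ↔
      Measure.hausdorffMeasure ((d : ℝ) - 1) (hypProj θ '' (A ∩ dirBoundary Ω θ)) = 0 := by
  set P := (ℝ ∙ θ)ᗮ.orthogonalProjectionOnto
  rw [hausdorffMeasure_image_hypProj hθ]
  constructor
  · rintro ⟨B, -, hAB, hB⟩
    exact measure_mono_null (image_mono (inter_subset_inter_left _ hAB))
      (addHaar_image_orthogonalProjectionOnto_eq_zero_of_dirMeas_eq_zero hbd hθ hB)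
  · intro h
    set N := toMeasurable μH[Module.finrank ℝ (ℝ ∙ θ)ᗮ] (P '' (A ∩ dirBoundary Ω θ))
    refine ⟨P ⁻¹' N ∪ (dirBoundary Ω θ)ᶜ, ?_, fun a ha => ?_,
      dirMeas_preimage_orthogonalProjectionOnto_union_compl_eq_zero hbd hθ hopen
        (by rwa [measure_toMeasurable])⟩
    · exact (P.continuous.measurable (measurableSet_toMeasurable _ _)).union
        (measurableSet_dirBoundary hopen hbd hθ).compl
    · by_cases hab : a ∈ dirBoundary Ω θ
      · exact Or.inl (subset_toMeasurable _ _ (mem_image_of_mem P ⟨ha, hab⟩))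
      · exact Or.inr hab

theorem stmt8 {d : ℕ} (Ω : Set (EuclideanSpace ℝ (Fin d)))
    (hopen : IsOpen Ω) (hne : Ω.Nonempty) (hbd : Bornology.IsBounded Ω)
    (θ : EuclideanSpace ℝ (Fin d)) (hθ : ‖θ‖ = 1)
    (A : Set (EuclideanSpace ℝ (Fin d))) (hAne : A.Nonempty)
    (hA : A ⊆ closure Ω \ Ω) :
    (∃ B : Set (EuclideanSpace ℝ (Fin d)), MeasurableSet B ∧ A ⊆ B ∧ dirMeas Ω θ B = 0) ↔
      Measure.hausdorffMeasure ((d : ℝ) - 1) (hypProj θ '' (A ∩ dirBoundary Ω θ)) = 0 :=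
  stmt8_general Ω hopen hbd θ hθ A
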